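/- arXiv:2304.02106 — 9 statements merged into one kernel-verified Lean document; each statement's English description precedes it below -/
import Mathlib

section
/- The second derivative of the eSSVI slice w(k) = (θ/2)(1 + ρφk + sqrt(φ²k² + 2φρk + 1)) with respect to k equals θ(1-ρ²)φ² / (2(φ²k² + 2φρk + 1)^{3/2}), and in particular is strictly positive for all real k whenever θ > 0, φ > 0 and |ρ| < 1. -/
/-- The second derivative of the eSSVI slice equals
`θ(1-ρ²)φ² / (2(φ²k² + 2φρk + 1)^(3/2))`, and is strictly positive. -/
theorem essvi_second_deriv (θ φ ρ : ℝ) (hθ : 0 < θ) (hφ : 0 < φ) (hρ : |ρ| < 1)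
    (w : ℝ → ℝ)
    (hw : w = fun k => (θ / 2) * (1 + ρ * φ * k + Real.sqrt (φ ^ 2 * k ^ 2 + 2 * φ * ρ * k + 1))) :
    ∀ k : ℝ,
      deriv (deriv w) k =
        θ * (1 - ρ ^ 2) * φ ^ 2 / (2 * (φ ^ 2 * k ^ 2 + 2 * φ * ρ * k + 1) ^ ((3 : ℝ) / 2)) ∧
      0 < deriv (deriv w) k := by
  have hρ2 : ρ ^ 2 < 1 := by
    have := abs_lt.mp hρ; nlinarith
  have key : ∀ x : ℝ, (0:ℝ) < φ ^ 2 * x ^ 2 + 2 * φ * ρ * x + 1 := by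
    intro x
    nlinarith [sq_nonneg (φ * x + ρ)]
  have hQ : ∀ x : ℝ, HasDerivAt (fun y : ℝ => φ ^ 2 * y ^ 2 + 2 * φ * ρ * y + 1)
      (2 * φ ^ 2 * x + 2 * φ * ρ) x := by
    intro x
    have h1 : HasDerivAt (fun y : ℝ => φ ^ 2 * y ^ 2 + 2 * φ * ρ * y + 1)
        (φ ^ 2 * (2 * x ^ 1) + 2 * φ * ρ * 1 + 0) x :=
      (((hasDerivAt_pow 2 x).const_mul (φ ^ 2)).add ((hasDerivAt_id x).const_mul (2 * φ * ρ))).add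
        (hasDerivAt_const x 1)
    convert h1 using 1; ring
  have hs : ∀ x : ℝ, (0:ℝ) < Real.sqrt (φ ^ 2 * x ^ 2 + 2 * φ * ρ * x + 1) := fun x =>
    Real.sqrt_pos.mpr (key x)
  -- first derivative
  have hw1 : ∀ x : ℝ, HasDerivAt w
      ((θ / 2) * (ρ * φ + (φ ^ 2 * x + φ * ρ) / Real.sqrt (φ ^ 2 * x ^ 2 + 2 * φ * ρ * x + 1))) x := by
    intro x
    have hsq : HasDerivAt (fun y : ℝ => Real.sqrt (φ ^ 2 * y ^ 2 + 2 * φ * ρ * y + 1))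
        (1 / (2 * Real.sqrt (φ ^ 2 * x ^ 2 + 2 * φ * ρ * x + 1)) * (2 * φ ^ 2 * x + 2 * φ * ρ)) x :=
      (Real.hasDerivAt_sqrt (key x).ne').comp x (hQ x)
    have hlin : HasDerivAt (fun y : ℝ => 1 + ρ * φ * y) (ρ * φ) x := by
      simpa using ((hasDerivAt_id x).const_mul (ρ * φ)).const_add 1
    have h := ((hlin.add hsq).const_mul (θ / 2))
    rw [hw]
    have hrw : 1 / (2 * Real.sqrt (φ ^ 2 * x ^ 2 + 2 * φ * ρ * x + 1)) *
        (2 * φ ^ 2 * x + 2 * φ * ρ) =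
        (φ ^ 2 * x + φ * ρ) / Real.sqrt (φ ^ 2 * x ^ 2 + 2 * φ * ρ * x + 1) := by
      field_simp
    rw [hrw] at h
    exact h
  have hdw : deriv w = fun x =>
      (θ / 2) * (ρ * φ + (φ ^ 2 * x + φ * ρ) / Real.sqrt (φ ^ 2 * x ^ 2 + 2 * φ * ρ * x + 1)) := by
    funext x; exact (hw1 x).deriv
  intro k
  set s := Real.sqrt (φ ^ 2 * k ^ 2 + 2 * φ * ρ * k + 1) with hsdef
  have hspos : 0 < s := hs k
  have hs2 : s ^ 2 = φ ^ 2 * k ^ 2 + 2 * φ * ρ * k + 1 := Real.sq_sqrt (key k).le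
  -- second derivative
  have hnum : HasDerivAt (fun y : ℝ => φ ^ 2 * y + φ * ρ) (φ ^ 2) k := by
    simpa using ((hasDerivAt_id k).const_mul (φ ^ 2)).add_const (φ * ρ)
  have hsq : HasDerivAt (fun y : ℝ => Real.sqrt (φ ^ 2 * y ^ 2 + 2 * φ * ρ * y + 1))
      (1 / (2 * s) * (2 * φ ^ 2 * k + 2 * φ * ρ)) k :=
    (Real.hasDerivAt_sqrt (key k).ne').comp k (hQ k)
  have h2 : HasDerivAt (deriv w)
      ((θ / 2) * ((φ ^ 2 * s - (φ ^ 2 * k + φ * ρ) * (1 / (2 * s) * (2 * φ ^ 2 * k + 2 * φ * ρ))) /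
        s ^ 2)) k := by
    rw [hdw]
    exact (((hnum.div hsq hspos.ne').const_add (ρ * φ)).const_mul (θ / 2))
  have hd2 : deriv (deriv w) k =
      (θ / 2) * ((φ ^ 2 * s - (φ ^ 2 * k + φ * ρ) * (1 / (2 * s) * (2 * φ ^ 2 * k + 2 * φ * ρ))) /
        s ^ 2) := h2.deriv
  have h32 : (φ ^ 2 * k ^ 2 + 2 * φ * ρ * k + 1) ^ ((3 : ℝ) / 2) =
      (φ ^ 2 * k ^ 2 + 2 * φ * ρ * k + 1) * s := by
    rw [show (3 : ℝ) / 2 = 1 + 1 / 2 by norm_num, Real.rpow_add (key k), Real.rpow_one,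
      ← Real.sqrt_eq_rpow]
  have heq : deriv (deriv w) k =
      θ * (1 - ρ ^ 2) * φ ^ 2 / (2 * (φ ^ 2 * k ^ 2 + 2 * φ * ρ * k + 1) ^ ((3 : ℝ) / 2)) := by
    rw [hd2, h32, ← hs2]
    field_simp
    linear_combination hs2
  refine ⟨heq, ?_⟩
  rw [heq]
  apply div_pos
  · exact mul_pos (mul_pos hθ (by linarith)) (by positivity)
  · exact mul_pos two_pos (Real.rpow_pos_of_pos (key k) _)
end

section
/- If two eSSVI slices w₁, w₂ (with parameters θᵢ > 0, φᵢ > 0, ρᵢ ∈ (-1,1)) satisfy w₁(k) ≤ w₂(k) for all k ∈ ℝ, then θ₂/θ₁ ≥ max{1, (1-ρ₁²)/(1-ρ₂²)}. -/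
/-- Lower bound for an eSSVI slice: `w(k) ≥ θ(1-ρ²)` for all `k`. -/
lemma essvi_lower (θ φ ρ k : ℝ) (hθ : 0 < θ) (hρ : |ρ| < 1) :
    θ * (1 - ρ ^ 2) ≤ (θ / 2) *
      (1 + ρ * φ * k + Real.sqrt (φ ^ 2 * k ^ 2 + 2 * φ * ρ * k + 1)) := by
  have hρ2 : ρ ^ 2 < 1 := by
    have := abs_nonneg ρ
    nlinarith [sq_abs ρ]
  have harg : (0:ℝ) ≤ φ ^ 2 * k ^ 2 + 2 * φ * ρ * k + 1 := by
    nlinarith [sq_nonneg (φ * k + ρ)]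
  set s := Real.sqrt (φ ^ 2 * k ^ 2 + 2 * φ * ρ * k + 1) with hs
  have hs0 : 0 ≤ s := Real.sqrt_nonneg _
  have hs2 : s ^ 2 = φ ^ 2 * k ^ 2 + 2 * φ * ρ * k + 1 := Real.sq_sqrt harg
  -- key: s ≥ -ρ(φk+ρ) + (1-ρ²)
  have key : -ρ * (φ * k + ρ) + (1 - ρ ^ 2) ≤ s := by
    rcases le_or_gt (-ρ * (φ * k + ρ) + (1 - ρ ^ 2)) 0 with h0 | h0
    · linarith
    · nlinarith [sq_nonneg (φ * k + 2 * ρ), sq_nonneg (s + (-ρ * (φ * k + ρ) + (1 - ρ ^ 2)))]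
  nlinarith

/-- If two eSSVI slices satisfy `w₁ ≤ w₂` pointwise, then
`θ₂/θ₁ ≥ max {1, (1-ρ₁²)/(1-ρ₂²)}`. -/
theorem essvi_noCA_necessary_theta (θ₁ θ₂ φ₁ φ₂ ρ₁ ρ₂ : ℝ)
    (hθ₁ : 0 < θ₁) (hθ₂ : 0 < θ₂) (hφ₁ : 0 < φ₁) (hφ₂ : 0 < φ₂)
    (hρ₁ : |ρ₁| < 1) (hρ₂ : |ρ₂| < 1)
    (w₁ w₂ : ℝ → ℝ)
    (hw₁ : w₁ = fun k => (θ₁ / 2) *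
      (1 + ρ₁ * φ₁ * k + Real.sqrt (φ₁ ^ 2 * k ^ 2 + 2 * φ₁ * ρ₁ * k + 1)))
    (hw₂ : w₂ = fun k => (θ₂ / 2) *
      (1 + ρ₂ * φ₂ * k + Real.sqrt (φ₂ ^ 2 * k ^ 2 + 2 * φ₂ * ρ₂ * k + 1)))
    (h : ∀ k : ℝ, w₁ k ≤ w₂ k) :
    θ₂ / θ₁ ≥ max 1 ((1 - ρ₁ ^ 2) / (1 - ρ₂ ^ 2)) := by
  have hρ₁2 : ρ₁ ^ 2 < 1 := by
    have := abs_nonneg ρ₁; nlinarith [sq_abs ρ₁]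
  have hρ₂2 : ρ₂ ^ 2 < 1 := by
    have := abs_nonneg ρ₂; nlinarith [sq_abs ρ₂]
  -- k = 0 gives θ₁ ≤ θ₂
  have h0 := h 0
  rw [hw₁, hw₂] at h0
  simp only at h0
  norm_num [Real.sqrt_one] at h0
  -- k = -2ρ₂/φ₂ gives θ₁(1-ρ₁²) ≤ θ₂(1-ρ₂²)
  have hk := h (-2 * ρ₂ / φ₂)
  rw [hw₁, hw₂] at hk
  simp only at hk
  have harg2 : φ₂ ^ 2 * (-2 * ρ₂ / φ₂) ^ 2 + 2 * φ₂ * ρ₂ * (-2 * ρ₂ / φ₂) + 1 = 1 := by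
    field_simp
    ring
  rw [harg2, Real.sqrt_one] at hk
  have hw2val : (θ₂ / 2) * (1 + ρ₂ * φ₂ * (-2 * ρ₂ / φ₂) + 1) = θ₂ * (1 - ρ₂ ^ 2) := by
    field_simp
    ring
  rw [hw2val] at hk
  have hlow := essvi_lower θ₁ φ₁ ρ₁ (-2 * ρ₂ / φ₂) hθ₁ hρ₁
  have hmain : θ₁ * (1 - ρ₁ ^ 2) ≤ θ₂ * (1 - ρ₂ ^ 2) := le_trans hlow hk
  rw [ge_iff_le, max_le_iff]
  constructor
  · rw [le_div_iff₀ hθ₁]; linarith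
  · rw [div_le_div_iff₀ (by linarith) hθ₁]
    nlinarith
end

section
/- If two eSSVI slices w₁, w₂ satisfy w₁(k) ≤ w₂(k) for all k ∈ ℝ, then their asymptotic slopes satisfy (θ₂φ₂)/(θ₁φ₁) ≥ max{(1+ρ₁)/(1+ρ₂), (1-ρ₁)/(1-ρ₂)}. -/
open Filter Topology

lemma essvi_slope_tendsto (θ φ ρ : ℝ) (hφ : 0 < φ) :
    Tendsto (fun k => (θ / 2) *
        (1 + ρ * φ * k + Real.sqrt (φ ^ 2 * k ^ 2 + 2 * φ * ρ * k + 1)) / k)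
      atTop (nhds (θ * φ * (1 + ρ) / 2)) := by
  have hinv : Tendsto (fun k : ℝ => 1 / k) atTop (nhds 0) := by
    simpa [one_div] using tendsto_inv_atTop_zero
  have hin : Tendsto (fun k : ℝ => φ ^ 2 + 2 * φ * ρ * (1 / k) + (1 / k) ^ 2)
      atTop (nhds (φ ^ 2)) := by
    have := ((tendsto_const_nhds.add ((hinv.const_mul (2 * φ * ρ)))).add
      (hinv.pow 2) : Tendsto _ atTop (nhds (φ ^ 2 + 2 * φ * ρ * 0 + 0 ^ 2)))
    simpa using this
  have hs : Tendsto (fun k : ℝ => Real.sqrt (φ ^ 2 + 2 * φ * ρ * (1 / k) + (1 / k) ^ 2))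
      atTop (nhds φ) := by
    have := (Real.continuous_sqrt.tendsto (φ ^ 2)).comp hin
    simpa [Real.sqrt_sq hφ.le, Function.comp_def] using this
  have h1 : Tendsto (fun k : ℝ => (θ / 2) *
      (1 / k + ρ * φ + Real.sqrt (φ ^ 2 + 2 * φ * ρ * (1 / k) + (1 / k) ^ 2)))
      atTop (nhds (θ * φ * (1 + ρ) / 2)) := by
    have := ((hinv.add (tendsto_const_nhds (x := ρ * φ))).add hs).const_mul (θ / 2)
    rw [show θ * φ * (1 + ρ) / 2 = (θ / 2) * ((0 + ρ * φ) + φ) by ring]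
    simpa using this
  refine h1.congr' ?_
  filter_upwards [eventually_gt_atTop (0 : ℝ)] with k hk
  have hk0 : k ≠ 0 := hk.ne'
  have hsq : Real.sqrt (φ ^ 2 * k ^ 2 + 2 * φ * ρ * k + 1)
      = k * Real.sqrt (φ ^ 2 + 2 * φ * ρ * (1 / k) + (1 / k) ^ 2) := by
    rw [← Real.sqrt_sq hk.le, ← Real.sqrt_mul (sq_nonneg k)]
    congr 1
    field_simp
    simp only [Real.sqrt_sq hk.le]
  rw [hsq]
  field_simp

/-- If two eSSVI slices satisfy `w₁ ≤ w₂` pointwise, then the asymptotic slopes satisfy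
`(θ₂φ₂)/(θ₁φ₁) ≥ max {(1+ρ₁)/(1+ρ₂), (1-ρ₁)/(1-ρ₂)}`. -/
theorem essvi_noCA_necessary_slopes (θ₁ θ₂ φ₁ φ₂ ρ₁ ρ₂ : ℝ)
    (hθ₁ : 0 < θ₁) (hθ₂ : 0 < θ₂) (hφ₁ : 0 < φ₁) (hφ₂ : 0 < φ₂)
    (hρ₁ : |ρ₁| < 1) (hρ₂ : |ρ₂| < 1)
    (w₁ w₂ : ℝ → ℝ)
    (hw₁ : w₁ = fun k => (θ₁ / 2) *
      (1 + ρ₁ * φ₁ * k + Real.sqrt (φ₁ ^ 2 * k ^ 2 + 2 * φ₁ * ρ₁ * k + 1)))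
    (hw₂ : w₂ = fun k => (θ₂ / 2) *
      (1 + ρ₂ * φ₂ * k + Real.sqrt (φ₂ ^ 2 * k ^ 2 + 2 * φ₂ * ρ₂ * k + 1)))
    (h : ∀ k : ℝ, w₁ k ≤ w₂ k) :
    (θ₂ * φ₂) / (θ₁ * φ₁) ≥ max ((1 + ρ₁) / (1 + ρ₂)) ((1 - ρ₁) / (1 - ρ₂)) := by
  have hρ₁' := abs_lt.mp hρ₁
  have hρ₂' := abs_lt.mp hρ₂
  have h1p₂ : 0 < 1 + ρ₂ := by linarith [hρ₂'.1]
  have h1m₂ : 0 < 1 - ρ₂ := by linarith [hρ₂'.2]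
  have hθφ₁ : 0 < θ₁ * φ₁ := mul_pos hθ₁ hφ₁
  -- limit at +∞
  have hA : θ₁ * φ₁ * (1 + ρ₁) / 2 ≤ θ₂ * φ₂ * (1 + ρ₂) / 2 := by
    refine le_of_tendsto_of_tendsto (essvi_slope_tendsto θ₁ φ₁ ρ₁ hφ₁)
      (essvi_slope_tendsto θ₂ φ₂ ρ₂ hφ₂) ?_
    filter_upwards [eventually_gt_atTop (0 : ℝ)] with k hk
    have := h k
    rw [hw₁, hw₂] at this
    exact div_le_div_of_nonneg_right this hk.le
  -- limit at -∞ (via substitution k ↦ -k)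
  have hB : θ₁ * φ₁ * (1 - ρ₁) / 2 ≤ θ₂ * φ₂ * (1 - ρ₂) / 2 := by
    have t₁ := essvi_slope_tendsto θ₁ φ₁ (-ρ₁) hφ₁
    have t₂ := essvi_slope_tendsto θ₂ φ₂ (-ρ₂) hφ₂
    rw [show (1 + -ρ₁) = 1 - ρ₁ by ring] at t₁
    rw [show (1 + -ρ₂) = 1 - ρ₂ by ring] at t₂
    refine le_of_tendsto_of_tendsto t₁ t₂ ?_
    filter_upwards [eventually_gt_atTop (0 : ℝ)] with k hk
    have := h (-k)
    rw [hw₁, hw₂] at this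
    simp only at this
    have e₁ : (θ₁ / 2) * (1 + -ρ₁ * φ₁ * k +
        Real.sqrt (φ₁ ^ 2 * k ^ 2 + 2 * φ₁ * -ρ₁ * k + 1))
        = (θ₁ / 2) * (1 + ρ₁ * φ₁ * (-k) +
        Real.sqrt (φ₁ ^ 2 * (-k) ^ 2 + 2 * φ₁ * ρ₁ * (-k) + 1)) := by ring_nf
    have e₂ : (θ₂ / 2) * (1 + -ρ₂ * φ₂ * k +
        Real.sqrt (φ₂ ^ 2 * k ^ 2 + 2 * φ₂ * -ρ₂ * k + 1))
        = (θ₂ / 2) * (1 + ρ₂ * φ₂ * (-k) +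
        Real.sqrt (φ₂ ^ 2 * (-k) ^ 2 + 2 * φ₂ * ρ₂ * (-k) + 1)) := by ring_nf
    simp only [e₁, e₂]
    exact div_le_div_of_nonneg_right this hk.le
  -- conclude
  have hA' : θ₁ * φ₁ * (1 + ρ₁) ≤ θ₂ * φ₂ * (1 + ρ₂) := by linarith
  have hB' : θ₁ * φ₁ * (1 - ρ₁) ≤ θ₂ * φ₂ * (1 - ρ₂) := by linarith
  rw [ge_iff_le, max_le_iff]
  constructor
  · rw [div_le_div_iff₀ h1p₂ hθφ₁]
    nlinarith
  · rw [div_le_div_iff₀ h1m₂ hθφ₁]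
    nlinarith
end

section
/- If ρ₁, ρ₂ ∈ (-1,1) satisfy Θ²Φ²(1-ρ₂²) = 1-ρ₁² with ΘΦ > 0 and ΘΦ ≠ 1, then (ΘΦρ₂ - ρ₁)² - (ΘΦ - 1)² > 0; consequently (ρ₁,ρ₂) does not satisfy (ΘΦρ₂ - ρ₁)² ≤ (ΘΦ - 1)². -/
/-- If `(ρ₁,ρ₂)` lies on the hyperbola `Θ²Φ²(1-ρ₂²) = 1-ρ₁²` with `ΘΦ > 0`, `ΘΦ ≠ 1`,
then `(ΘΦρ₂ - ρ₁)² - (ΘΦ - 1)² > 0`; consequently `(ΘΦρ₂ - ρ₁)² ≤ (ΘΦ - 1)²` fails. -/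
theorem essvi_hyperbola_stripe_disjoint (Θ Φ ρ₁ ρ₂ : ℝ)
    (hpos : 0 < Θ * Φ) (hne : Θ * Φ ≠ 1)
    (hρ₁ : |ρ₁| < 1) (hρ₂ : |ρ₂| < 1)
    (hH : (Θ * Φ) ^ 2 * (1 - ρ₂ ^ 2) = 1 - ρ₁ ^ 2) :
    0 < (Θ * Φ * ρ₂ - ρ₁) ^ 2 - (Θ * Φ - 1) ^ 2 ∧
      ¬ (Θ * Φ * ρ₂ - ρ₁) ^ 2 ≤ (Θ * Φ - 1) ^ 2 := by
  obtain ⟨h1, h2⟩ := abs_lt.1 hρ₁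
  obtain ⟨h3, h4⟩ := abs_lt.1 hρ₂
  set B := Θ * Φ with hB
  have hu : 0 < B * (1 - ρ₂) := mul_pos hpos (by linarith)
  have hy : 0 < (1 + ρ₁ : ℝ) := by linarith
  have hxy : (B * (1 + ρ₂)) * (B * (1 - ρ₂)) = (1 + ρ₁) * (1 - ρ₁) := by
    nlinarith [hH]
  have hvu : (1 - ρ₁) - B * (1 - ρ₂) ≠ 0 := by
    intro h
    apply hne
    have hx : B * (1 + ρ₂) = 1 + ρ₁ :=
      mul_left_cancel₀ (ne_of_gt hu)
        (by nlinarith : (B * (1 - ρ₂)) * (B * (1 + ρ₂)) = (B * (1 - ρ₂)) * (1 + ρ₁))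
    nlinarith
  have hsq : 0 < ((1 - ρ₁) - B * (1 - ρ₂)) ^ 2 := pow_pos (abs_pos.mpr hvu) 2 |>.trans_eq (by rw [sq_abs])
  have hmul : 0 < ((B * ρ₂ - ρ₁) ^ 2 - (B - 1) ^ 2) * (B * (1 - ρ₂)) := by
    have hident : ((B * ρ₂ - ρ₁) ^ 2 - (B - 1) ^ 2) * (B * (1 - ρ₂)) =
        (1 + ρ₁) * ((1 - ρ₁) - B * (1 - ρ₂)) ^ 2 +
        ((1 - ρ₁) - B * (1 - ρ₂)) * ((B * (1 + ρ₂)) * (B * (1 - ρ₂)) - (1 + ρ₁) * (1 - ρ₁)) := by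
      ring
    rw [hident, hxy, sub_self, mul_zero, add_zero]
    exact mul_pos hy hsq
  have key : 0 < (B * ρ₂ - ρ₁) ^ 2 - (B - 1) ^ 2 := (mul_pos_iff_of_pos_right hu).mp hmul
  exact ⟨key, by linarith⟩
end

section
/- Suppose Θ > 1 and Φ = 1, and suppose ρ₁ = Θρ₂ + (Θ-1) or ρ₁ = Θρ₂ - (Θ-1) with ρ₁, ρ₂ ∈ (-1,1). Then the polynomial Q(x) reduces to the constant -4Θ²(Θ-1)²(ρ₂ ± 1)², which is strictly negative; in particular Q has no real roots. -/
/-- The quadratic factor `Q(x)` arising from the eSSVI slice-intersection equation. -/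
noncomputable def essviQ (Θ Φ ρ₁ ρ₂ x : ℝ) : ℝ :=
  (((Θ * Φ * ρ₂ - ρ₁) ^ 2 - (Θ * Φ - 1) ^ 2) *
      ((Θ * Φ + 1) ^ 2 - (Θ * Φ * ρ₂ - ρ₁) ^ 2)) * x ^ 2 +
    (4 * Θ * (ρ₁ * (-Θ ^ 2 * Φ ^ 2 + (Θ - 2) * Θ * ρ₂ ^ 2 * Φ ^ 2 + 2 * Θ * Φ ^ 2 - 1) +
        ρ₂ * Φ * (Θ ^ 2 * ρ₂ ^ 2 * Φ ^ 2 - Θ ^ 2 * Φ ^ 2 + 2 * Θ - 1) +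
        (1 - 2 * Θ) * ρ₂ * ρ₁ ^ 2 * Φ + ρ₁ ^ 3)) * x +
    4 * (Θ - 1) * Θ * (Θ * Φ ^ 2 * ρ₂ ^ 2 - Θ * Φ ^ 2 - ρ₁ ^ 2 + 1)

/-- With `Phi = 1` and `rho1 = Theta*rho2 ± (Theta-1)`, the polynomial Q reduces to the
strictly negative constant `-4*Theta^2*(Theta-1)^2*(rho2 ± 1)^2`; in particular Q has no real roots. -/
theorem essvi_Q_Phi_eq_one (Θ ρ₁ ρ₂ : ℝ) (hΘ : 1 < Θ)
    (hρ₁ : |ρ₁| < 1) (hρ₂ : |ρ₂| < 1)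
    (hcase : ρ₁ = Θ * ρ₂ + (Θ - 1) ∨ ρ₁ = Θ * ρ₂ - (Θ - 1)) :
    (ρ₁ = Θ * ρ₂ + (Θ - 1) →
      ∀ x : ℝ, essviQ Θ 1 ρ₁ ρ₂ x = -4 * Θ ^ 2 * (Θ - 1) ^ 2 * (ρ₂ + 1) ^ 2) ∧
    (ρ₁ = Θ * ρ₂ - (Θ - 1) →
      ∀ x : ℝ, essviQ Θ 1 ρ₁ ρ₂ x = -4 * Θ ^ 2 * (Θ - 1) ^ 2 * (ρ₂ - 1) ^ 2) ∧
    (∀ x : ℝ, essviQ Θ 1 ρ₁ ρ₂ x < 0) ∧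
    (∀ x : ℝ, essviQ Θ 1 ρ₁ ρ₂ x ≠ 0) := by

  have h2 := abs_lt.mp hρ₂
  have hkey : ∀ x : ℝ,
      (ρ₁ = Θ * ρ₂ + (Θ - 1) →
        essviQ Θ 1 ρ₁ ρ₂ x = -4 * Θ ^ 2 * (Θ - 1) ^ 2 * (ρ₂ + 1) ^ 2) ∧
      (ρ₁ = Θ * ρ₂ - (Θ - 1) →
        essviQ Θ 1 ρ₁ ρ₂ x = -4 * Θ ^ 2 * (Θ - 1) ^ 2 * (ρ₂ - 1) ^ 2) := by
    intro x
    constructor <;> intro h <;> subst h <;> simp only [essviQ] <;> ring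
  have hneg : ∀ x : ℝ, essviQ Θ 1 ρ₁ ρ₂ x < 0 := by
    intro x
    rcases hcase with h | h
    · rw [(hkey x).1 h]
      have : (0:ℝ) < 4 * Θ ^ 2 * (Θ - 1) ^ 2 * (ρ₂ + 1) ^ 2 := by
        have hΘ1 : Θ - 1 ≠ 0 := by intro h; linarith
        have hne : ρ₂ + 1 ≠ 0 := by intro h; linarith [h2.1]
        have hΘ0 : Θ ≠ 0 := by intro h; linarith
        positivity
      linarith
    · rw [(hkey x).2 h]
      have : (0:ℝ) < 4 * Θ ^ 2 * (Θ - 1) ^ 2 * (ρ₂ - 1) ^ 2 := by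
        have hΘ1 : Θ - 1 ≠ 0 := by intro h; linarith
        have hne : ρ₂ - 1 ≠ 0 := by intro h; linarith [h2.2]
        have hΘ0 : Θ ≠ 0 := by intro h; linarith
        positivity
      linarith
  exact ⟨fun h x => (hkey x).1 h, fun h x => (hkey x).2 h, hneg,
    fun x => ne_of_lt (hneg x)⟩
end

section
/- Suppose Θ > 1, ΘΦ = 1 and ρ₁ = ρ₂ = ρ ∈ (-1,1). Then the polynomial Q(x) reduces to the constant 4(Θ-1)²(1-ρ²), which is strictly positive; in particular Q has no real roots. -/
/-- With `Theta*Phi = 1` and `rho1 = rho2 = rho`, the polynomial Q reduces to the strictly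
positive constant `4*(Theta-1)^2*(1-rho^2)`; in particular Q has no real roots. -/
theorem essvi_Q_ThetaPhi_eq_one (Θ ρ : ℝ) (hΘ : 1 < Θ) (hρ : |ρ| < 1) :
    (∀ x : ℝ, essviQ Θ (1 / Θ) ρ ρ x = 4 * (Θ - 1) ^ 2 * (1 - ρ ^ 2)) ∧
    (∀ x : ℝ, 0 < essviQ Θ (1 / Θ) ρ ρ x) ∧
    (∀ x : ℝ, essviQ Θ (1 / Θ) ρ ρ x ≠ 0) := by
  have hΘ0 : Θ ≠ 0 := by linarith
  have heq : ∀ x : ℝ, essviQ Θ (1 / Θ) ρ ρ x = 4 * (Θ - 1) ^ 2 * (1 - ρ ^ 2) := by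
    intro x
    unfold essviQ
    field_simp
    ring
  have hρ2 : ρ ^ 2 < 1 := by
    have := abs_lt.mp hρ
    nlinarith
  have hpos : ∀ x : ℝ, 0 < essviQ Θ (1 / Θ) ρ ρ x := by
    intro x
    rw [heq x]
    have h1 : (0:ℝ) < (Θ - 1) ^ 2 := pow_pos (by linarith) 2
    nlinarith [mul_pos h1 (sub_pos.mpr hρ2)]
  exact ⟨heq, hpos, fun x => ne_of_gt (hpos x)⟩
end

section
/- Assume Θ > 1, ΘΦ > 1 and ΘΦ² ≤ 1. At (ρ₁,ρ₂) = (0,0), the quadratic Q(x) has the root x₀ = 2·sqrt(Θ(Θ-1)(1-ΘΦ²))/(Θ²Φ² - 1), and at this root Z(x₀) = x₀² + 1 - Θ²(Φ²x₀² + 1) - (Θ-1+ΘΦ·0-0)² = -2(Θ-1)Θ[Θ²Φ² - 1 + 2(1-ΘΦ²)]/(Θ²Φ² - 1) < 0, while α(x₀) = Θ - 1 > 0. -/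
/-- With `Theta > 1`, `Theta*Phi > 1`, `Theta*Phi^2 <= 1` and `rho1 = rho2 = 0`, the quadratic Q
has the root `x0 = 2*sqrt(Theta*(Theta-1)*(1-Theta*Phi^2))/(Theta^2*Phi^2-1)`; at this root
`Z(x0) < 0` with the stated value, while `alpha(x0) = Theta - 1 > 0`. -/
theorem essvi_test_point_origin (Θ Φ : ℝ) (hΘ : 1 < Θ) (hΦ : 0 < Φ)
    (hTP : 1 < Θ * Φ) (hTP2 : Θ * Φ ^ 2 ≤ 1)
    (x₀ : ℝ)
    (hx₀ : x₀ = 2 * Real.sqrt (Θ * (Θ - 1) * (1 - Θ * Φ ^ 2)) / (Θ ^ 2 * Φ ^ 2 - 1))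
    (Z : ℝ → ℝ)
    (hZ : Z = fun x => (x ^ 2 + 2 * 0 * x + 1) - (Θ - 1 + (Θ * Φ * 0 - 0) * x) ^ 2 -
      Θ ^ 2 * (Φ ^ 2 * x ^ 2 + 2 * Φ * 0 * x + 1)) :
    essviQ Θ Φ 0 0 x₀ = 0 ∧
    Z x₀ = -(2 * (Θ - 1) * Θ * (Θ ^ 2 * Φ ^ 2 - 1 + 2 * (1 - Θ * Φ ^ 2))) /
      (Θ ^ 2 * Φ ^ 2 - 1) ∧
    Z x₀ < 0 ∧
    0 < Θ - 1 := by
  have hmul : (0:ℝ) < Θ * Φ ^ 2 := by positivity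
  have h1 : (0:ℝ) ≤ Θ * (Θ - 1) * (1 - Θ * Φ ^ 2) :=
    mul_nonneg (mul_nonneg (by linarith) (by linarith)) (by linarith)
  have hs2 : (Real.sqrt (Θ * (Θ - 1) * (1 - Θ * Φ ^ 2))) ^ 2
      = Θ * (Θ - 1) * (1 - Θ * Φ ^ 2) := Real.sq_sqrt h1
  set s := Real.sqrt (Θ * (Θ - 1) * (1 - Θ * Φ ^ 2)) with hs
  have hD : 0 < Θ ^ 2 * Φ ^ 2 - 1 := by nlinarith
  have hDne : Θ ^ 2 * Φ ^ 2 - 1 ≠ 0 := ne_of_gt hD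
  subst hZ
  have hZval : (fun x => (x ^ 2 + 2 * 0 * x + 1) - (Θ - 1 + (Θ * Φ * 0 - 0) * x) ^ 2 -
      Θ ^ 2 * (Φ ^ 2 * x ^ 2 + 2 * Φ * 0 * x + 1)) x₀
      = -(2 * (Θ - 1) * Θ * (Θ ^ 2 * Φ ^ 2 - 1 + 2 * (1 - Θ * Φ ^ 2))) /
        (Θ ^ 2 * Φ ^ 2 - 1) := by
    simp only
    rw [hx₀]
    field_simp
    nlinarith [hs2, sq_nonneg s, hD]
  refine ⟨?_, hZval, ?_, by linarith⟩
  · simp only [essviQ]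
    rw [hx₀]
    field_simp
    nlinarith [hs2, hD]
  · rw [hZval]
    apply div_neg_of_neg_of_pos _ hD
    nlinarith
end

section
/- Assume Θ > 1, Φ > 0, Φ ≠ 1, ΘΦ² > 1, ρ₁ = 0 and ρ₂ = ±sqrt((Θ-1)(ΘΦ²-1))/(ΘΦ). Then the discriminant of Q(x) vanishes, the unique root is x± = ±2sqrt((Θ-1)(ΘΦ²-1))/(Θ(1-Φ²)), and α(x±) = (Θ-1)(ΘΦ²+Θ-2)/(Θ(1-Φ²)) while Z(x±) = -2(Θ-1)(ΘΦ²+Θ-2)²/(Θ(Φ²-1)²) < 0. -/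
lemma essvi_aux_key (Θ Φ r x : ℝ) (hΘ : Θ ≠ 0) (hΦ : Φ ≠ 0) (hd : 1 - Φ ^ 2 ≠ 0)
    (hr : r ^ 2 = (Θ - 1) * (Θ * Φ ^ 2 - 1)) :
    essviQ Θ Φ 0 (r / (Θ * Φ)) x
      = -(Θ * (Φ ^ 2 - 1)) ^ 2 * (x - 2 * r / (Θ * (1 - Φ ^ 2))) ^ 2 := by
  rw [essviQ]
  field_simp
  linear_combination ((1 * x ^ 2) + (4 * r * x) + (-1 * r ^ 2 * x ^ 2) + (-2 * Φ ^ 2 * x ^ 2) + (-8 * Φ ^ 2 * r * x) + (2 * Φ ^ 2 * r ^ 2 * x ^ 2) + (1 * Φ ^ 4 * x ^ 2) + (4 * Φ ^ 4 * r * x) + (-1 * Φ ^ 4 * r ^ 2 * x ^ 2) + (4 * Θ) + (1 * Θ * x ^ 2) + (-8 * Θ * Φ ^ 2) + (-1 * Θ * Φ ^ 2 * x ^ 2) + (4 * Θ * Φ ^ 4) + (-1 * Θ * Φ ^ 4 * x ^ 2) + (1 * Θ * Φ ^ 6 * x ^ 2) + (1 * Θ ^ 2 * Φ ^ 2 * x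 ^ 2) + (-2 * Θ ^ 2 * Φ ^ 4 * x ^ 2) + (1 * Θ ^ 2 * Φ ^ 6 * x ^ 2)) * hr

lemma essvi_aux_disc (Θ Φ r : ℝ) (hΘ : Θ ≠ 0) (hΦ : Φ ≠ 0)
    (hr : r ^ 2 = (Θ - 1) * (Θ * Φ ^ 2 - 1)) :
    (4 * Θ * (0 * (-Θ ^ 2 * Φ ^ 2 + (Θ - 2) * Θ * (r / (Θ * Φ)) ^ 2 * Φ ^ 2 + 2 * Θ * Φ ^ 2 - 1) +
        (r / (Θ * Φ)) * Φ * (Θ ^ 2 * (r / (Θ * Φ)) ^ 2 * Φ ^ 2 - Θ ^ 2 * Φ ^ 2 + 2 * Θ - 1) +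
        (1 - 2 * Θ) * (r / (Θ * Φ)) * 0 ^ 2 * Φ + 0 ^ 3)) ^ 2 -
      4 * (((Θ * Φ * (r / (Θ * Φ)) - 0) ^ 2 - (Θ * Φ - 1) ^ 2) *
          ((Θ * Φ + 1) ^ 2 - (Θ * Φ * (r / (Θ * Φ)) - 0) ^ 2)) *
        (4 * (Θ - 1) * Θ * (Θ * Φ ^ 2 * (r / (Θ * Φ)) ^ 2 - Θ * Φ ^ 2 - 0 ^ 2 + 1)) = 0 := by
  field_simp
  linear_combination ((16 * Θ) + (32 * Θ * r ^ 2) + (16 * Θ * r ^ 4) + (-32 * Θ ^ 3 * Φ ^ 2) + (-32 * Θ ^ 3 * Φ ^ 2 * r ^ 2) + (16 * Θ ^ 5 * Φ ^ 4)) * hr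

lemma essvi_aux_alpha (Θ Φ r : ℝ) (hΘ : Θ ≠ 0) (hΦ : Φ ≠ 0) (hd : 1 - Φ ^ 2 ≠ 0)
    (hr : r ^ 2 = (Θ - 1) * (Θ * Φ ^ 2 - 1)) :
    Θ - 1 + (Θ * Φ * (r / (Θ * Φ)) - 0) * (2 * r / (Θ * (1 - Φ ^ 2)))
      = (Θ - 1) * (Θ * Φ ^ 2 + Θ - 2) / (Θ * (1 - Φ ^ 2)) := by
  field_simp
  linear_combination (2 : ℝ) * hr

lemma essvi_aux_Z (Θ Φ r : ℝ) (hΘ : Θ ≠ 0) (hΦ : Φ ≠ 0) (hd : 1 - Φ ^ 2 ≠ 0)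
    (hd2 : Φ ^ 2 - 1 ≠ 0) (hr : r ^ 2 = (Θ - 1) * (Θ * Φ ^ 2 - 1)) :
    ((2 * r / (Θ * (1 - Φ ^ 2))) ^ 2 + 2 * 0 * (2 * r / (Θ * (1 - Φ ^ 2))) + 1) -
      (Θ - 1 + (Θ * Φ * (r / (Θ * Φ)) - 0) * (2 * r / (Θ * (1 - Φ ^ 2)))) ^ 2 -
      Θ ^ 2 * (Φ ^ 2 * (2 * r / (Θ * (1 - Φ ^ 2))) ^ 2 +
        2 * Φ * (r / (Θ * Φ)) * (2 * r / (Θ * (1 - Φ ^ 2))) + 1)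
      = -(2 * (Θ - 1) * (Θ * Φ ^ 2 + Θ - 2) ^ 2) / (Θ * (Φ ^ 2 - 1) ^ 2) := by
  field_simp
  linear_combination ((-4 * r ^ 2) + (8 * Φ ^ 2 * r ^ 2) + (-4 * Φ ^ 4 * r ^ 2) + (8 * Θ) + (-16 * Θ * Φ ^ 2) + (8 * Θ * Φ ^ 4) + (-8 * Θ ^ 2) + (16 * Θ ^ 2 * Φ ^ 2) + (-8 * Θ ^ 2 * Φ ^ 4)) * hr

/-- With `Theta > 1`, `Phi ≠ 1`, `Theta*Phi^2 > 1`, `rho1 = 0` and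
`rho2 = eps*sqrt((Theta-1)(Theta*Phi^2-1))/(Theta*Phi)`, the discriminant of Q vanishes, the
unique root is `x0 = eps*2*sqrt((Theta-1)(Theta*Phi^2-1))/(Theta*(1-Phi^2))`, and `alpha(x0)`,
`Z(x0)` take the stated values, with `Z(x0) < 0`. -/
theorem essvi_test_points_vanishing_discriminant (Θ Φ ε : ℝ) (hΘ : 1 < Θ) (hΦ : 0 < Φ)
    (hΦne : Φ ≠ 1) (hTP2 : 1 < Θ * Φ ^ 2) (hε : ε = 1 ∨ ε = -1)
    (ρ₂ : ℝ) (hρ₂ : ρ₂ = ε * Real.sqrt ((Θ - 1) * (Θ * Φ ^ 2 - 1)) / (Θ * Φ))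
    (x₀ : ℝ)
    (hx₀ : x₀ = ε * 2 * Real.sqrt ((Θ - 1) * (Θ * Φ ^ 2 - 1)) / (Θ * (1 - Φ ^ 2)))
    (α Z : ℝ → ℝ)
    (hα : α = fun x => Θ - 1 + (Θ * Φ * ρ₂ - 0) * x)
    (hZ : Z = fun x => (x ^ 2 + 2 * 0 * x + 1) - (α x) ^ 2 -
      Θ ^ 2 * (Φ ^ 2 * x ^ 2 + 2 * Φ * ρ₂ * x + 1)) :
    (4 * Θ * (0 * (-Θ ^ 2 * Φ ^ 2 + (Θ - 2) * Θ * ρ₂ ^ 2 * Φ ^ 2 + 2 * Θ * Φ ^ 2 - 1) +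
        ρ₂ * Φ * (Θ ^ 2 * ρ₂ ^ 2 * Φ ^ 2 - Θ ^ 2 * Φ ^ 2 + 2 * Θ - 1) +
        (1 - 2 * Θ) * ρ₂ * 0 ^ 2 * Φ + 0 ^ 3)) ^ 2 -
      4 * (((Θ * Φ * ρ₂ - 0) ^ 2 - (Θ * Φ - 1) ^ 2) *
          ((Θ * Φ + 1) ^ 2 - (Θ * Φ * ρ₂ - 0) ^ 2)) *
        (4 * (Θ - 1) * Θ * (Θ * Φ ^ 2 * ρ₂ ^ 2 - Θ * Φ ^ 2 - 0 ^ 2 + 1)) = 0 ∧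
    (∀ x : ℝ, essviQ Θ Φ 0 ρ₂ x = 0 ↔ x = x₀) ∧
    α x₀ = (Θ - 1) * (Θ * Φ ^ 2 + Θ - 2) / (Θ * (1 - Φ ^ 2)) ∧
    Z x₀ = -(2 * (Θ - 1) * (Θ * Φ ^ 2 + Θ - 2) ^ 2) / (Θ * (Φ ^ 2 - 1) ^ 2) ∧
    Z x₀ < 0 := by
  have hΘ0 : (0:ℝ) < Θ := by linarith
  have hΘne : Θ ≠ 0 := ne_of_gt hΘ0
  have hΦ0 : Φ ≠ 0 := ne_of_gt hΦ
  set s := Real.sqrt ((Θ - 1) * (Θ * Φ ^ 2 - 1)) with hs_def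
  have hs2 : s ^ 2 = (Θ - 1) * (Θ * Φ ^ 2 - 1) :=
    Real.sq_sqrt (by nlinarith)
  have hε2 : ε ^ 2 = 1 := by rcases hε with h | h <;> rw [h] <;> ring
  have hd : (1:ℝ) - Φ ^ 2 ≠ 0 := by
    intro h
    have h' : (Φ - 1) * (Φ + 1) = 0 := by nlinarith
    rcases mul_eq_zero.mp h' with h'' | h''
    · exact hΦne (by linarith)
    · linarith
  have hd2 : Φ ^ 2 - 1 ≠ 0 := fun h => hd (by linarith)
  have hr : (ε * s) ^ 2 = (Θ - 1) * (Θ * Φ ^ 2 - 1) := by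
    rw [mul_pow, hε2, one_mul]; exact hs2
  have hρr : ρ₂ = (ε * s) / (Θ * Φ) := hρ₂
  have hx₀2 : x₀ = 2 * (ε * s) / (Θ * (1 - Φ ^ 2)) := by rw [hx₀]; ring
  have hnum : (0:ℝ) < Θ * Φ ^ 2 + Θ - 2 := by nlinarith
  refine ⟨?_, ?_, ?_, ?_, ?_⟩
  · rw [hρr]
    exact essvi_aux_disc Θ Φ (ε * s) hΘne hΦ0 hr
  · intro x
    have hQ : essviQ Θ Φ 0 ρ₂ x = -(Θ * (Φ ^ 2 - 1)) ^ 2 * (x - x₀) ^ 2 := by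
      rw [hρr, hx₀2]
      exact essvi_aux_key Θ Φ (ε * s) x hΘne hΦ0 hd hr
    rw [hQ]
    constructor
    · intro h
      have hc : Θ * (Φ ^ 2 - 1) ≠ 0 := mul_ne_zero hΘne hd2
      rcases mul_eq_zero.mp h with h' | h'
      · exact absurd (neg_eq_zero.mp h') (pow_ne_zero 2 hc)
      · have hx : x - x₀ = 0 := by
          exact (pow_eq_zero_iff two_ne_zero).mp h'
        linarith
    · intro h; rw [h]; ring
  · simp only [hα]
    rw [hρr, hx₀2]
    exact essvi_aux_alpha Θ Φ (ε * s) hΘne hΦ0 hd hr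
  · simp only [hZ, hα]
    rw [hρr, hx₀2]
    exact essvi_aux_Z Θ Φ (ε * s) hΘne hΦ0 hd hd2 hr
  · have hZval : Z x₀ = -(2 * (Θ - 1) * (Θ * Φ ^ 2 + Θ - 2) ^ 2) / (Θ * (Φ ^ 2 - 1) ^ 2) := by
      simp only [hZ, hα]
      rw [hρr, hx₀2]
      exact essvi_aux_Z Θ Φ (ε * s) hΘne hΦ0 hd hd2 hr
    rw [hZval]
    apply div_neg_of_neg_of_pos
    · nlinarith [mul_pos hnum hnum, mul_pos (mul_pos hnum hnum) hΘ0]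
    · have h1 : (0:ℝ) < (Φ ^ 2 - 1) ^ 2 :=
        (sq_nonneg _).lt_of_ne (Ne.symm (pow_ne_zero 2 hd2))
      exact mul_pos hΘ0 h1
end

section
/- Let θ > 0 and φ₁, φ₂ > 0, and let ρ₁, ρ₂ satisfy ρ₁² ≥ ρ₂² and ρ₁ρ₂ > 0. If w₁ and w₂ are eSSVI slices with the same θ, with parameters (ρ₁, φ₁) and (ρ₂, φ₂) such that φ₁ρ₁ = φ₂ρ₂ (i.e. φ₂ = φ₁ρ₁/ρ₂, so that Φ = φ₂/φ₁ = ρ₁/ρ₂), then w₁(k) ≤ w₂(k) for all k ∈ ℝ. -/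
/-- Case (ii) of the `Θ = 1` lemma: if two eSSVI slices share the same `θ`, with
`φ₂ = φ₁ρ₁/ρ₂`, `ρ₁ρ₂ > 0` and `ρ₁² ≥ ρ₂²`, then `w₁ ≤ w₂` pointwise. -/
theorem essvi_equal_theta_case_ii (θ φ₁ φ₂ ρ₁ ρ₂ : ℝ)
    (hθ : 0 < θ) (hφ₁ : 0 < φ₁) (hρ₁ : |ρ₁| < 1) (hρ₂ : |ρ₂| < 1)
    (hρρ : 0 < ρ₁ * ρ₂) (hsq : ρ₂ ^ 2 ≤ ρ₁ ^ 2) (hφ₂ : φ₂ = φ₁ * ρ₁ / ρ₂)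
    (w₁ w₂ : ℝ → ℝ)
    (hw₁ : w₁ = fun k => (θ / 2) *
      (1 + ρ₁ * φ₁ * k + Real.sqrt (φ₁ ^ 2 * k ^ 2 + 2 * φ₁ * ρ₁ * k + 1)))
    (hw₂ : w₂ = fun k => (θ / 2) *
      (1 + ρ₂ * φ₂ * k + Real.sqrt (φ₂ ^ 2 * k ^ 2 + 2 * φ₂ * ρ₂ * k + 1))) :
    ∀ k : ℝ, w₁ k ≤ w₂ k := by
  intro k
  subst hw₁ hw₂ hφ₂
  have hρ₂ne : ρ₂ ≠ 0 := by
    rintro rfl; simp at hρρ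
  have h1 : φ₁ * ρ₁ / ρ₂ * ρ₂ = φ₁ * ρ₁ := by field_simp
  have h2 : φ₁ ^ 2 ≤ (φ₁ * ρ₁ / ρ₂) ^ 2 := by
    rw [div_pow, le_div_iff₀ (by positivity)]
    calc φ₁ ^ 2 * ρ₂ ^ 2 ≤ φ₁ ^ 2 * ρ₁ ^ 2 := by nlinarith
    _ = (φ₁ * ρ₁) ^ 2 := by ring
  simp only
  have hlin : ρ₂ * (φ₁ * ρ₁ / ρ₂) = ρ₁ * φ₁ := by field_simp
  have hsqrt : Real.sqrt (φ₁ ^ 2 * k ^ 2 + 2 * φ₁ * ρ₁ * k + 1) ≤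
      Real.sqrt ((φ₁ * ρ₁ / ρ₂) ^ 2 * k ^ 2 + 2 * (φ₁ * ρ₁ / ρ₂) * ρ₂ * k + 1) := by
    apply Real.sqrt_le_sqrt
    have := mul_le_mul_of_nonneg_right h2 (sq_nonneg k)
    have h3 : 2 * (φ₁ * ρ₁ / ρ₂) * ρ₂ * k = 2 * φ₁ * ρ₁ * k := by rw [mul_assoc (2 * (φ₁ * ρ₁ / ρ₂))]; field_simp
    linarith
  apply mul_le_mul_of_nonneg_left _ (by positivity)
  rw [hlin]
  linarith
end
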